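/- Let (X, Π) be a weighted pure d-dimensional simplicial complex. For every integer k with 1 ≤ k ≤ d, the second eigenvalues of the k-th down-up walk and the (k−1)-th up-down walk coincide and satisfy λ₂(P∨_k) = λ₂(P∧_{k−1}) ≤ 1 − (1/(k+1)) · ∏_{j=−1}^{k−2} (1 − γ_j). -/

import Mathlib

open Finset

/-- A weighted pure `d`-dimensional simplicial complex on a finite ground set `V`.
Faces are finsets; a face of cardinality `m` has dimension `m - 1` (so `X(j)` is the
set of faces of cardinality `j + 1`).  The family of faces is downward closed, every
face is contained in a face of cardinality `d + 1` (purity), and a probability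
distribution `Π = Π_d` (positive weights summing to `1`) is given on the
top-dimensional faces. -/
structure WSC (V : Type*) [DecidableEq V] [Fintype V] (d : ℕ) where
  faces : Finset (Finset V)
  empty_mem : ∅ ∈ faces
  down_closed : ∀ β ∈ faces, ∀ α ⊆ β, α ∈ faces
  pure : ∀ α ∈ faces, ∃ β ∈ faces, α ⊆ β ∧ β.card = d + 1
  dim_le : ∀ α ∈ faces, α.card ≤ d + 1
  weight : Finset V → ℝ
  weight_pos : ∀ β ∈ faces, β.card = d + 1 → 0 < weight β
  weight_zero : ∀ β : Finset V, β ∉ faces ∨ β.card ≠ d + 1 → weight β = 0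
  weight_sum : ∑ β ∈ faces.filter (fun β => β.card = d + 1), weight β = 1

namespace WSC

variable {V : Type*} [DecidableEq V] [Fintype V] {d : ℕ}

/-- Auxiliary recursion for the marginal distributions: `Waux X t` is the marginal
distribution `Π_{d - t}` on faces of cardinality `d + 1 - t`, defined by
`Π_j(α) = (1/(j+2)) ∑_{β ∈ X(j+1), β ⊇ α} Π_{j+1}(β)`. -/
noncomputable def Waux (X : WSC V d) : ℕ → Finset V → ℝ
  | 0 => X.weight
  | (t + 1) => fun α =>
      (1 / ((d + 1 - t : ℕ) : ℝ)) *
        ∑ β ∈ X.faces.filter (fun β => α ⊆ β ∧ β.card = d + 1 - t), X.Waux t β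

/-- `X.W m α` is the marginal probability `Π_{m-1}(α)` of the face `α` of cardinality
`m` (dimension `m - 1`). -/
noncomputable def W (X : WSC V d) (m : ℕ) : Finset V → ℝ := X.Waux (d + 1 - m)

/-- The inner product `⟨f, g⟩_{Π_{m-1}}` on `ℝ^{X(m-1)}` (faces of cardinality `m`). -/
noncomputable def inn (X : WSC V d) (m : ℕ) (f g : Finset V → ℝ) : ℝ :=
  ∑ α ∈ X.faces.filter (fun α => α.card = m), X.W m α * f α * g α

/-- The up operator `U_j`: `(U_j f)(β) = (1/(j+2)) ∑_{x ∈ β} f(β \ {x})`, for `β` of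
cardinality `j + 2`.  (The formula is uniform in the cardinality of `β`.) -/
noncomputable def upOp (f : Finset V → ℝ) : Finset V → ℝ :=
  fun β => (1 / (β.card : ℝ)) * ∑ x ∈ β, f (β.erase x)

/-- The down operator `D_{j+1}`:
`(D_{j+1} g)(α) = ∑_{β ∈ X(j+1), β ⊇ α} Π_{j+1}(β) g(β) / ((j+2) Π_j(α))`, for `α` of
cardinality `j + 1`.  (The formula is uniform in the cardinality of `α`.) -/
noncomputable def downOp (X : WSC V d) (g : Finset V → ℝ) : Finset V → ℝ :=
  fun α => ∑ β ∈ X.faces.filter (fun β => α ⊆ β ∧ β.card = α.card + 1),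
      (X.W (α.card + 1) β * g β) / (((α.card : ℝ) + 1) * X.W α.card α)

/-- The down-up walk `P∨_k = U_{k-1} D_k`, acting on functions on `X(k)` (faces of
cardinality `k + 1`). -/
noncomputable def downUp (X : WSC V d) (f : Finset V → ℝ) : Finset V → ℝ :=
  upOp (X.downOp f)

/-- The up-down walk `P∧_k = D_{k+1} U_k`, acting on functions on `X(k)` (faces of
cardinality `k + 1`). -/
noncomputable def upDown (X : WSC V d) (f : Finset V → ℝ) : Finset V → ℝ :=
  X.downOp (upOp f)

/-- The `k`-th non-lazy up-down walk `N_k = ((k+2)/(k+1)) (P∧_k - (1/(k+2)) I)`. -/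
noncomputable def nonLazy (X : WSC V d) (k : ℕ) (f : Finset V → ℝ) : Finset V → ℝ :=
  fun α => (((k : ℝ) + 2) / ((k : ℝ) + 1)) * (X.upDown f α - (1 / ((k : ℝ) + 2)) * f α)

/-- The up-down walk `U_{a,b} = D_{a+1} ⋯ D_b · U_{b-1} ⋯ U_a` on `X(a)` through
`X(b)`, where `t = b - a`. -/
noncomputable def upDownAB (X : WSC V d) (t : ℕ) (f : Finset V → ℝ) : Finset V → ℝ :=
  (X.downOp)^[t] (upOp^[t] f)

/-- The second largest eigenvalue of a row-stochastic operator `M` on `ℝ^{X(m-1)}`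
(faces of cardinality `m`) which is self-adjoint with respect to `⟨·,·⟩_{Π_{m-1}}`
and has stationary distribution `Π_{m-1}`: by the variational principle it is the
supremum of the Rayleigh quotients of (nonzero) functions orthogonal to the
constant function `1`. -/
noncomputable def lam2 (X : WSC V d) (m : ℕ) (M : (Finset V → ℝ) → Finset V → ℝ) : ℝ :=
  sSup { r : ℝ | ∃ f : Finset V → ℝ,
    X.inn m f (fun _ => 1) = 0 ∧ X.inn m f f ≠ 0 ∧
    r = X.inn m f (M f) / X.inn m f f }

/-- The vertices of the link `X_α`: those `x ∉ α` with `α ∪ {x} ∈ X`. -/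
def linkVerts (X : WSC V d) (α : Finset V) : Finset V :=
  Finset.univ.filter (fun x => x ∉ α ∧ insert x α ∈ X.faces)

/-- The link distribution `Π^α_l(τ) = Π_{j+1+l}(α ∪ τ) / (C(|α ∪ τ|, |α|) · Π_j(α))`
for a face `α` of dimension `j` and `τ ∈ X_α(l)`. -/
noncomputable def linkPi (X : WSC V d) (α τ : Finset V) : ℝ :=
  X.W (α ∪ τ).card (α ∪ τ) / ((Nat.choose (α ∪ τ).card α.card : ℝ) * X.W α.card α)

/-- The random walk matrix `M_α` of the graph of the link `X_α`, with entries
`M_α(x, y) = Π^α_1({x, y}) / (2 Π^α_0(x))` for `{x, y} ∈ X_α(1)` and `0` otherwise,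
viewed as an operator on functions on the vertices of the link. -/
noncomputable def linkWalk (X : WSC V d) (α : Finset V) (f : V → ℝ) : V → ℝ :=
  fun x => ∑ y ∈ (X.linkVerts α).filter
      (fun y => y ≠ x ∧ insert y (insert x α) ∈ X.faces),
    (X.linkPi α {x, y} / (2 * X.linkPi α {x})) * f y

/-- The projector `J_α` onto the constant functions on the link: `J_α g` is the
constant function with value `E_{x ∼ Π^α_0}[g(x)]`. -/
noncomputable def linkJ (X : WSC V d) (α : Finset V) (g : V → ℝ) : V → ℝ :=
  fun _ => ∑ x ∈ X.linkVerts α, X.linkPi α {x} * g x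

/-- The inner product `⟨g, h⟩_{Π^α_0}` on functions on the vertices of the link. -/
noncomputable def linkInner (X : WSC V d) (α : Finset V) (g h : V → ℝ) : ℝ :=
  ∑ x ∈ X.linkVerts α, X.linkPi α {x} * g x * h x

/-- The second largest eigenvalue `λ₂(M_α)` of the random walk matrix of the graph
of the link `X_α`, via the variational principle. -/
noncomputable def linkLam2 (X : WSC V d) (α : Finset V) : ℝ :=
  sSup { r : ℝ | ∃ f : V → ℝ,
    X.linkInner α f (fun _ => 1) = 0 ∧ X.linkInner α f f ≠ 0 ∧
    r = X.linkInner α f (X.linkWalk α f) / X.linkInner α f f }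

/-- `X.gammaC m` is `γ_{m-1} = max_{α ∈ X(m-1)} λ₂(M_α)`, the maximum over faces `α`
of cardinality `m` (dimension `m - 1`) of the second eigenvalue of the link walk. -/
noncomputable def gammaC (X : WSC V d) (m : ℕ) : ℝ :=
  sSup { r : ℝ | ∃ α ∈ X.faces, α.card = m ∧ r = X.linkLam2 α }

end WSC

/-!
Write `‖f‖²_m = ⟨f, f⟩_{Π_{m-1}}`. Since `U` and `D` are adjoint, `⟨f, P∧ f⟩ = ‖U f‖²` and
`⟨g, P∨ g⟩ = ‖D g‖²`, and both maps preserve orthogonality to the constants. Cauchy–Schwarz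
gives `‖U f‖⁴ = ⟨f, D U f⟩² ≤ ‖f‖² ‖D U f‖²`, so every Rayleigh quotient of `P∧` is dominated by
one of `P∨` (at `U f`), and symmetrically; hence the two second eigenvalues agree.

For the bound we follow Garland: for `f` on faces of cardinality `m + 1`,
`‖U f‖² = (1/(m+2)) ‖f‖² + ((m+1)/(m+2)) ∑_α Π(α) ⟨f_α, M_α f_α⟩` over the faces `α` of
cardinality `m`, where `f_α x = f (α ∪ {x})`. In each link
`⟨f_α, M_α f_α⟩ ≤ γ ‖f_α‖² + (1 - γ) μ_α²` with `μ_α` the mean of `f_α`; the `‖f_α‖²` reassemble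
to `‖f‖²` and the `μ_α` to `D f`, and `‖D f‖²` is bounded by induction through the first
paragraph.
-/

section QuotientSet

variable {E F : Type*}

def quotientSet (P : E → Prop) (num den : E → ℝ) : Set ℝ :=
  {r | ∃ f, P f ∧ den f ≠ 0 ∧ r = num f / den f}

variable {P : E → Prop} {num den : E → ℝ} {c : ℝ}

lemma forall_mem_quotientSet_le_iff (hden : ∀ f, 0 ≤ den f) :
    (∀ r ∈ quotientSet P num den, r ≤ c) ↔ ∀ f, P f → 0 < den f → num f ≤ c * den f := by
  constructor
  · intro h f hf hpos
    rw [← div_le_iff₀ hpos]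
    exact h _ ⟨f, hf, hpos.ne', rfl⟩
  · rintro h r ⟨f, hf, hne, rfl⟩
    have hpos := (hden f).lt_of_ne' hne
    rw [div_le_iff₀ hpos]
    exact h f hf hpos

lemma sSup_quotientSet_le (hden : ∀ f, 0 ≤ den f) (hc : 0 ≤ c)
    (h : ∀ f, P f → 0 < den f → num f ≤ c * den f) : sSup (quotientSet P num den) ≤ c :=
  Real.sSup_le ((forall_mem_quotientSet_le_iff hden).2 h) hc

lemma bddAbove_quotientSet (hden : ∀ f, 0 ≤ den f)
    (h : ∀ f, P f → 0 < den f → num f ≤ c * den f) : BddAbove (quotientSet P num den) :=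
  ⟨c, (forall_mem_quotientSet_le_iff hden).2 h⟩

lemma le_sSup_quotientSet_mul (hden : ∀ f, 0 ≤ den f)
    (hbdd : BddAbove (quotientSet P num den)) {f : E} (hf : P f) (hpos : 0 < den f) :
    num f ≤ sSup (quotientSet P num den) * den f :=
  (forall_mem_quotientSet_le_iff hden).1 (fun _ hr => le_csSup hbdd hr) f hf hpos

lemma sSup_quotientSet_nonneg (hnum : ∀ f, 0 ≤ num f) (hden : ∀ f, 0 ≤ den f) :
    0 ≤ sSup (quotientSet P num den) :=
  Real.sSup_nonneg (by rintro r ⟨f, -, -, rfl⟩; exact div_nonneg (hnum f) (hden f))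

variable {Q : F → Prop} {p : E → ℝ} {q : F → ℝ} {A : E → F} {B : F → E}

/-- With `p = ‖·‖²` and `q = ‖·‖²`, `hsq` is Cauchy–Schwarz `‖A f‖⁴ = ⟨f, B A f⟩² ≤ ‖f‖² ‖B A f‖²`
for adjoint `A` and `B`. -/
lemma le_mul_of_sq_le_mul (hc : 0 ≤ c) (hp : ∀ f, 0 ≤ p f) (hq : ∀ g, 0 ≤ q g)
    (hA : ∀ f, P f → Q (A f)) (hsq : ∀ f, q (A f) ^ 2 ≤ p f * p (B (A f)))
    (hB : ∀ g, Q g → 0 < q g → p (B g) ≤ c * q g) {f : E} (hf : P f) : q (A f) ≤ c * p f := by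
  rcases (hq (A f)).eq_or_lt' with h0 | hpos
  · rw [h0]
    exact mul_nonneg hc (hp f)
  · have hBA := mul_le_mul_of_nonneg_left (hB _ (hA f hf) hpos) (hp f)
    refine le_of_mul_le_mul_left ?_ hpos
    nlinarith [hsq f]

lemma sSup_quotientSet_le_sSup (hp : ∀ f, 0 ≤ p f) (hq : ∀ g, 0 ≤ q g)
    (hA : ∀ f, P f → Q (A f)) (hsq : ∀ f, q (A f) ^ 2 ≤ p f * p (B (A f)))
    (hbdd : BddAbove (quotientSet Q (fun g => p (B g)) q)) :
    sSup (quotientSet P (fun f => q (A f)) p)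
      ≤ sSup (quotientSet Q (fun g => p (B g)) q) := by
  have hc := sSup_quotientSet_nonneg (P := Q) (fun g => hp (B g)) hq
  exact sSup_quotientSet_le hp hc fun f hf _ =>
    le_mul_of_sq_le_mul hc hp hq hA hsq
      (fun _ hg hpos => le_sSup_quotientSet_mul hq hbdd hg hpos) hf

end QuotientSet

namespace WSC

section upOp

variable {V : Type*} [DecidableEq V]

lemma upOp_apply {m : ℕ} (g : Finset V → ℝ) {β : Finset V} (hβ : β.card = m + 1) :
    upOp g β = (1 / ((m : ℝ) + 1)) * ∑ x ∈ β, g (β.erase x) := by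
  rw [upOp, hβ]
  push_cast
  rfl

lemma upOp_one {β : Finset V} (hβ : β.Nonempty) : upOp (fun _ => (1 : ℝ)) β = 1 := by
  have : (β.card : ℝ) ≠ 0 := by exact_mod_cast hβ.card_pos.ne'
  simp only [upOp, sum_const, nsmul_eq_mul, mul_one]
  field_simp

end upOp

variable {V : Type*} [DecidableEq V] [Fintype V] {d : ℕ} (X : WSC V d)

abbrev level (m : ℕ) : Finset (Finset V) := X.faces.filter (fun α => α.card = m)

lemma mem_linkVerts {α : Finset V} {x : V} :
    x ∈ X.linkVerts α ↔ x ∉ α ∧ insert x α ∈ X.faces := by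
  simp [linkVerts]

lemma linkVerts_insert (α : Finset V) (x : V) :
    X.linkVerts (insert x α)
      = (X.linkVerts α).filter (fun y => y ≠ x ∧ insert y (insert x α) ∈ X.faces) := by
  ext y
  simp only [mem_linkVerts, mem_filter, mem_insert, not_or]
  constructor
  · rintro ⟨⟨hyx, hyα⟩, hf⟩
    exact ⟨⟨hyα, X.down_closed _ hf _ (insert_subset_insert y (subset_insert x α))⟩,
      hyx, hf⟩
  · rintro ⟨⟨hyα, -⟩, hyx, hf⟩
    exact ⟨⟨hyx, hyα⟩, hf⟩

lemma sum_supersets_eq_sum_linkVerts (α : Finset V) (G : Finset V → ℝ) :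
    ∑ β ∈ X.faces.filter (fun β => α ⊆ β ∧ β.card = α.card + 1), G β
      = ∑ x ∈ X.linkVerts α, G (insert x α) := by
  refine (sum_bij (fun x _ => insert x α) ?_ ?_ ?_ fun _ _ => rfl).symm
  · intro x hx
    rw [mem_linkVerts] at hx
    exact mem_filter.2 ⟨hx.2, subset_insert x α, card_insert_of_notMem hx.1⟩
  · intro x hx y hy hxy
    rw [mem_linkVerts] at hx
    have : x ∈ insert y α := hxy ▸ mem_insert_self x α
    exact (mem_insert.1 this).resolve_right hx.1
  · intro β hβ
    obtain ⟨hβf, hαβ, hβc⟩ := mem_filter.1 hβ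
    obtain ⟨x, hx⟩ : (β \ α).Nonempty := by
      rw [← card_pos, card_sdiff_of_subset hαβ]; omega
    obtain ⟨hxβ, hxα⟩ := mem_sdiff.1 hx
    have hins : insert x α = β :=
      eq_of_subset_of_card_le (insert_subset hxβ hαβ) (by rw [card_insert_of_notMem hxα, hβc])
    exact ⟨x, (X.mem_linkVerts).2 ⟨hxα, hins ▸ hβf⟩, hins⟩

lemma sum_level_succ_sum_mem (m : ℕ) (F : Finset V → Finset V → V → ℝ) :
    ∑ β ∈ X.level (m + 1), ∑ x ∈ β, F (β.erase x) β x
      = ∑ α ∈ X.level m, ∑ x ∈ X.linkVerts α, F α (insert x α) x := by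
  rw [sum_sigma', sum_sigma']
  refine sum_bij' (fun p _ => ⟨p.1.erase p.2, p.2⟩) (fun p _ => ⟨insert p.2 p.1, p.2⟩)
    ?_ ?_ ?_ ?_ ?_
  · rintro ⟨β, x⟩ h
    simp only [mem_sigma, mem_filter] at h ⊢
    obtain ⟨⟨hβ, hc⟩, hx⟩ := h
    exact ⟨⟨X.down_closed β hβ _ (erase_subset x β), by rw [card_erase_of_mem hx, hc]; rfl⟩,
      (X.mem_linkVerts).2 ⟨notMem_erase x β, by rwa [insert_erase hx]⟩⟩
  · rintro ⟨α, x⟩ h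
    simp only [mem_sigma, mem_filter, mem_linkVerts] at h ⊢
    obtain ⟨⟨-, hc⟩, hxα, hf⟩ := h
    exact ⟨⟨hf, by rw [card_insert_of_notMem hxα, hc]⟩, mem_insert_self x α⟩
  · rintro ⟨β, x⟩ h
    simp only [mem_sigma] at h
    simp [insert_erase h.2]
  · rintro ⟨α, x⟩ h
    simp only [mem_sigma, mem_linkVerts] at h
    simp [erase_insert h.2.1]
  · rintro ⟨β, x⟩ h
    simp only [mem_sigma] at h
    simp [insert_erase h.2]

lemma weight_nonneg (β : Finset V) : 0 ≤ X.weight β := by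
  by_cases h : β ∈ X.faces ∧ β.card = d + 1
  · exact (X.weight_pos β h.1 h.2).le
  · rw [X.weight_zero β (by tauto)]

lemma W_nonneg (m : ℕ) (β : Finset V) : 0 ≤ X.W m β := by
  suffices ∀ t, 0 ≤ X.Waux t β from this _
  intro t
  induction t generalizing β with
  | zero => exact X.weight_nonneg β
  | succ t ih => exact mul_nonneg (by positivity) (sum_nonneg fun γ _ => ih γ)

lemma W_eq_sum_linkVerts (α : Finset V) (hα : α.card ≤ d) :
    X.W α.card α
      = (1 / ((α.card : ℝ) + 1)) * ∑ x ∈ X.linkVerts α, X.W (α.card + 1) (insert x α) := by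
  rw [← X.sum_supersets_eq_sum_linkVerts α (X.W (α.card + 1))]
  have h1 : d + 1 - α.card = (d - α.card) + 1 := by omega
  have h2 : d + 1 - (d - α.card) = α.card + 1 := by omega
  have h3 : d + 1 - (α.card + 1) = d - α.card := by omega
  rw [W, h1, Waux, h2, W, h3]
  push_cast
  ring

lemma sum_W_insert (α : Finset V) (hα : α.card ≤ d) :
    ∑ x ∈ X.linkVerts α, X.W (α.card + 1) (insert x α)
      = ((α.card : ℝ) + 1) * X.W α.card α := by
  rw [X.W_eq_sum_linkVerts α hα]
  field_simp

lemma W_pos {α : Finset V} (hα : α ∈ X.faces) : 0 < X.W α.card α := by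
  suffices ∀ t, ∀ α ∈ X.faces, α.card + t = d + 1 → 0 < X.W α.card α from
    this _ α hα (Nat.add_sub_of_le (X.dim_le α hα))
  intro t
  induction t with
  | zero =>
    intro α hα hc
    rw [W, show d + 1 - α.card = 0 by omega]
    exact X.weight_pos α hα (by omega)
  | succ t ih =>
    intro α hα hc
    obtain ⟨β, hβ, hαβ, hβc⟩ := X.pure α hα
    obtain ⟨x, hx⟩ : (β \ α).Nonempty := by
      rw [← card_pos, card_sdiff_of_subset hαβ]; omega
    obtain ⟨hxβ, hxα⟩ := mem_sdiff.1 hx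
    have hxf : insert x α ∈ X.faces := X.down_closed β hβ _ (insert_subset hxβ hαβ)
    have hpos : 0 < X.W (α.card + 1) (insert x α) := by
      have := ih _ hxf (by rw [card_insert_of_notMem hxα]; omega)
      rwa [card_insert_of_notMem hxα] at this
    rw [X.W_eq_sum_linkVerts α (by omega)]
    exact mul_pos (by positivity) (sum_pos' (fun y _ => X.W_nonneg _ _)
      ⟨x, (X.mem_linkVerts).2 ⟨hxα, hxf⟩, hpos⟩)

lemma inn_comm (m : ℕ) (f g : Finset V → ℝ) : X.inn m f g = X.inn m g f :=
  sum_congr rfl fun _ _ => by ring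

lemma W_mul_mul_self_nonneg (m : ℕ) (f : Finset V → ℝ) (α : Finset V) :
    0 ≤ X.W m α * f α * f α := by
  rw [mul_assoc]
  exact mul_nonneg (X.W_nonneg m α) (mul_self_nonneg _)

lemma inn_self_nonneg (m : ℕ) (f : Finset V → ℝ) : 0 ≤ X.inn m f f :=
  sum_nonneg fun α _ => X.W_mul_mul_self_nonneg m f α

lemma sq_inn_le (m : ℕ) (f g : Finset V → ℝ) :
    X.inn m f g ^ 2 ≤ X.inn m f f * X.inn m g g :=
  sum_sq_le_sum_mul_sum_of_sq_le_mul _ (fun α _ => X.W_mul_mul_self_nonneg m f α)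
    (fun α _ => X.W_mul_mul_self_nonneg m g α) (fun _ _ => le_of_eq (by ring))

lemma linkPi_single (α : Finset V) {x : V} (hx : x ∉ α) :
    X.linkPi α {x}
      = X.W (α.card + 1) (insert x α) / (((α.card : ℝ) + 1) * X.W α.card α) := by
  rw [linkPi, union_comm, ← insert_eq, card_insert_of_notMem hx, Nat.choose_succ_self_right]
  push_cast
  rfl

lemma W_mul_linkPi_single {α : Finset V} (hα : α ∈ X.faces) {x : V} (hx : x ∉ α) :
    X.W α.card α * X.linkPi α {x} = X.W (α.card + 1) (insert x α) / ((α.card : ℝ) + 1) := by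
  have := (X.W_pos hα).ne'
  rw [X.linkPi_single α hx]
  field_simp

lemma linkPi_single_pos {α : Finset V} (hα : α ∈ X.faces) {x : V} (hx : x ∈ X.linkVerts α) :
    0 < X.linkPi α {x} := by
  obtain ⟨hxα, hxf⟩ := (X.mem_linkVerts).1 hx
  have hWx := X.W_pos hxf
  rw [card_insert_of_notMem hxα] at hWx
  have hW := X.W_pos hα
  rw [X.linkPi_single α hxα]
  positivity

lemma sum_linkPi_single {α : Finset V} (hα : α ∈ X.faces) (hd : α.card ≤ d) :
    ∑ x ∈ X.linkVerts α, X.linkPi α {x} = 1 := by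
  have hW := (X.W_pos hα).ne'
  refine mul_left_cancel₀ hW ?_
  rw [mul_sum, sum_congr rfl fun x hx => X.W_mul_linkPi_single hα ((X.mem_linkVerts).1 hx).1,
    ← sum_div, X.sum_W_insert α hd]
  field_simp

lemma downOp_eq_sum_linkPi (g : Finset V → ℝ) (α : Finset V) :
    X.downOp g α = ∑ x ∈ X.linkVerts α, X.linkPi α {x} * g (insert x α) := by
  rw [downOp, X.sum_supersets_eq_sum_linkVerts α]
  refine sum_congr rfl fun x hx => ?_
  rw [X.linkPi_single α ((X.mem_linkVerts).1 hx).1]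
  ring

lemma inn_downOp (m : ℕ) (g h : Finset V → ℝ) :
    X.inn m g (X.downOp h) = X.inn (m + 1) (upOp g) h := by
  have lhs : ∀ α ∈ X.level m, X.W m α * g α * X.downOp h α
      = ∑ x ∈ X.linkVerts α,
          X.W (m + 1) (insert x α) / ((m : ℝ) + 1) * g α * h (insert x α) := by
    intro α hα
    obtain ⟨hαf, rfl⟩ := mem_filter.1 hα
    rw [X.downOp_eq_sum_linkPi, mul_sum]
    refine sum_congr rfl fun x hx => ?_
    rw [← X.W_mul_linkPi_single hαf ((X.mem_linkVerts).1 hx).1]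
    ring
  have rhs : ∀ β ∈ X.level (m + 1), X.W (m + 1) β * upOp g β * h β
      = ∑ x ∈ β, X.W (m + 1) β / ((m : ℝ) + 1) * g (β.erase x) * h β := by
    intro β hβ
    rw [upOp_apply g (mem_filter.1 hβ).2]
    simp only [mul_sum, sum_mul]
    exact sum_congr rfl fun _ _ => by ring
  rw [inn, inn, sum_congr rfl lhs, sum_congr rfl rhs,
    X.sum_level_succ_sum_mem m fun α β _ => X.W (m + 1) β / ((m : ℝ) + 1) * g α * h β]

lemma downOp_one {α : Finset V} (hα : α ∈ X.faces) (hd : α.card ≤ d) :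
    X.downOp (fun _ => 1) α = 1 := by
  simp only [X.downOp_eq_sum_linkPi, mul_one, X.sum_linkPi_single hα hd]

lemma inn_upOp_one_eq_zero {m : ℕ} (hm : m ≤ d) {f : Finset V → ℝ}
    (hf : X.inn m f (fun _ => 1) = 0) : X.inn (m + 1) (upOp f) (fun _ => 1) = 0 := by
  rw [← X.inn_downOp, ← hf]
  refine sum_congr rfl fun α hα => ?_
  obtain ⟨hαf, rfl⟩ := mem_filter.1 hα
  rw [X.downOp_one hαf hm]

lemma inn_downOp_one_eq_zero {m : ℕ} {g : Finset V → ℝ}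
    (hg : X.inn (m + 1) g (fun _ => 1) = 0) : X.inn m (X.downOp g) (fun _ => 1) = 0 := by
  rw [inn_comm, X.inn_downOp, inn_comm, ← hg]
  refine sum_congr rfl fun β hβ => ?_
  have hne : β.Nonempty := by rw [← card_pos, (mem_filter.1 hβ).2]; omega
  rw [upOp_one hne]

lemma inn_upDown (m : ℕ) (f : Finset V → ℝ) :
    X.inn m f (X.upDown f) = X.inn (m + 1) (upOp f) (upOp f) :=
  X.inn_downOp m f (upOp f)

lemma inn_downUp (m : ℕ) (g : Finset V → ℝ) :
    X.inn (m + 1) g (X.downUp g) = X.inn m (X.downOp g) (X.downOp g) := by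
  rw [inn_comm, downUp, ← X.inn_downOp]

lemma sq_inn_upOp_le (m : ℕ) (f : Finset V → ℝ) :
    X.inn (m + 1) (upOp f) (upOp f) ^ 2
      ≤ X.inn m f f * X.inn m (X.upDown f) (X.upDown f) := by
  rw [← inn_upDown]
  exact X.sq_inn_le m f _

lemma sq_inn_downOp_le (m : ℕ) (g : Finset V → ℝ) :
    X.inn m (X.downOp g) (X.downOp g) ^ 2
      ≤ X.inn (m + 1) g g * X.inn (m + 1) (X.downUp g) (X.downUp g) := by
  rw [← inn_downUp]
  exact X.sq_inn_le (m + 1) g _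

lemma linkPi_nonneg (α τ : Finset V) : 0 ≤ X.linkPi α τ :=
  div_nonneg (X.W_nonneg _ _) (mul_nonneg (Nat.cast_nonneg _) (X.W_nonneg _ _))

lemma linkInner_self_nonneg (α : Finset V) (f : V → ℝ) : 0 ≤ X.linkInner α f f :=
  sum_nonneg fun x _ => by
    rw [mul_assoc]
    exact mul_nonneg (X.linkPi_nonneg _ _) (mul_self_nonneg _)

lemma W_mul_linkPi_pair {α : Finset V} (hα : α ∈ X.faces) {x y : V} (hx : x ∉ α)
    (hy : y ∉ insert x α) :
    X.W α.card α * X.linkPi α {x, y}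
      = 2 * X.W (α.card + 2) (insert y (insert x α))
          / (((α.card : ℝ) + 2) * ((α.card : ℝ) + 1)) := by
  have hW := (X.W_pos hα).ne'
  have hunion : α ∪ {x, y} = insert y (insert x α) := by
    ext z
    simp only [mem_union, mem_insert, mem_singleton]
    tauto
  have hcard : (insert y (insert x α)).card = α.card + 2 := by
    rw [card_insert_of_notMem hy, card_insert_of_notMem hx]
  have hchoose :
      ((α.card + 2).choose α.card : ℝ) = ((α.card : ℝ) + 2) * ((α.card : ℝ) + 1) / 2 := by
    rw [Nat.choose_symm_add, Nat.cast_choose_two]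
    push_cast
    ring
  rw [linkPi, hunion, hcard, hchoose]
  field_simp

lemma mem_linkVerts_insert_comm {α : Finset V} {x y : V} :
    x ∈ X.linkVerts α ∧ y ∈ X.linkVerts (insert x α)
      ↔ x ∈ X.linkVerts (insert y α) ∧ y ∈ X.linkVerts α := by
  rw [and_comm (a := x ∈ X.linkVerts (insert y α))]
  have key : ∀ {x y : V}, x ∈ X.linkVerts α ∧ y ∈ X.linkVerts (insert x α) →
      y ∈ X.linkVerts α ∧ x ∈ X.linkVerts (insert y α) := by
    intro x y
    simp only [mem_linkVerts, mem_insert, not_or]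
    rintro ⟨⟨hxα, -⟩, ⟨hyx, hyα⟩, hf⟩
    rw [insert_comm] at hf
    exact ⟨⟨hyα, X.down_closed _ hf _ (subset_insert x _)⟩, ⟨Ne.symm hyx, hxα⟩, hf⟩
  exact ⟨key, key⟩

/-- The link walk `M_α` as a bilinear form: `linkB α u v = ⟨u, M_α v⟩_{Π^α_0}`. -/
noncomputable def linkB (α : Finset V) (u v : V → ℝ) : ℝ :=
  ∑ x ∈ X.linkVerts α, ∑ y ∈ X.linkVerts (insert x α), X.linkPi α {x, y} / 2 * u x * v y

lemma linkInner_linkWalk {α : Finset V} (hα : α ∈ X.faces) (u v : V → ℝ) :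
    X.linkInner α u (X.linkWalk α v) = X.linkB α u v := by
  refine sum_congr rfl fun x hx => ?_
  have := (X.linkPi_single_pos hα hx).ne'
  rw [linkWalk, ← linkVerts_insert, mul_sum]
  refine sum_congr rfl fun y _ => ?_
  field_simp

lemma linkB_comm (α : Finset V) (u v : V → ℝ) : X.linkB α u v = X.linkB α v u := by
  rw [linkB, sum_comm' fun x y => X.mem_linkVerts_insert_comm]
  refine sum_congr rfl fun x _ => sum_congr rfl fun y _ => ?_
  rw [pair_comm]
  ring

lemma linkB_add_left (α : Finset V) (u₁ u₂ v : V → ℝ) :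
    X.linkB α (fun x => u₁ x + u₂ x) v = X.linkB α u₁ v + X.linkB α u₂ v := by
  simp only [linkB, ← sum_add_distrib]
  exact sum_congr rfl fun _ _ => sum_congr rfl fun _ _ => by ring

lemma linkB_add_right (α : Finset V) (u v₁ v₂ : V → ℝ) :
    X.linkB α u (fun x => v₁ x + v₂ x) = X.linkB α u v₁ + X.linkB α u v₂ := by
  rw [linkB_comm, linkB_add_left, linkB_comm, X.linkB_comm α v₂]

lemma sum_linkPi_pair {α : Finset V} (hα : α ∈ X.faces) (hd : α.card + 1 ≤ d) {x : V}
    (hx : x ∈ X.linkVerts α) :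
    ∑ y ∈ X.linkVerts (insert x α), X.linkPi α {x, y} = 2 * X.linkPi α {x} := by
  obtain ⟨hxα, hxf⟩ := (X.mem_linkVerts).1 hx
  have hcard : (insert x α).card = α.card + 1 := card_insert_of_notMem hxα
  refine mul_left_cancel₀ (X.W_pos hα).ne' ?_
  rw [mul_sum, sum_congr rfl fun y hy =>
      X.W_mul_linkPi_pair hα hxα ((X.mem_linkVerts).1 hy).1,
    ← sum_div, ← mul_sum, mul_left_comm, X.W_mul_linkPi_single hα hxα]
  have := X.sum_W_insert (insert x α) (by omega)
  rw [hcard] at this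
  rw [this]
  push_cast
  field_simp
  ring

lemma linkB_const_right {α : Finset V} (hα : α ∈ X.faces) (hd : α.card + 1 ≤ d)
    (u : V → ℝ) (a : ℝ) :
    X.linkB α u (fun _ => a) = X.linkInner α u (fun _ => 1) * a := by
  rw [linkInner, sum_mul]
  refine sum_congr rfl fun x hx => ?_
  rw [← sum_mul, ← sum_mul, ← sum_div, X.sum_linkPi_pair hα hd hx]
  ring

lemma linkB_self_le {α : Finset V} (hα : α ∈ X.faces) (hd : α.card + 1 ≤ d) (f : V → ℝ) :
    X.linkB α f f ≤ X.linkInner α f f :=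
  calc X.linkB α f f ≤ X.linkB α (fun x => f x ^ 2 / 2) (fun _ => 1)
        + X.linkB α (fun _ => 1) (fun y => f y ^ 2 / 2) := by
        simp only [linkB, ← sum_add_distrib]
        gcongr with x _ y _
        have := X.linkPi_nonneg α {x, y}
        nlinarith [sq_nonneg (f x - f y)]
    _ = X.linkInner α f f := by
        rw [X.linkB_comm α (fun _ => 1), X.linkB_const_right hα hd]
        simp only [linkInner, mul_one, ← sum_add_distrib]
        exact sum_congr rfl fun _ _ => by ring

lemma linkLam2_le_one {α : Finset V} (hα : α ∈ X.faces) (hd : α.card + 1 ≤ d) :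
    X.linkLam2 α ≤ 1 :=
  sSup_quotientSet_le (X.linkInner_self_nonneg α) zero_le_one fun f _ _ => by
    rw [one_mul, X.linkInner_linkWalk hα]
    exact X.linkB_self_le hα hd f

lemma gammaC_le_one {m : ℕ} (hm : m + 1 ≤ d) : X.gammaC m ≤ 1 :=
  Real.sSup_le (by rintro _ ⟨α, hα, rfl, rfl⟩; exact X.linkLam2_le_one hα hm) zero_le_one

lemma linkB_le_gammaC_mul {α : Finset V} (hα : α ∈ X.faces) (hd : α.card + 1 ≤ d)
    {h : V → ℝ} (hh : X.linkInner α h (fun _ => 1) = 0) :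
    X.linkB α h h ≤ X.gammaC α.card * X.linkInner α h h := by
  have hγ : X.linkLam2 α ≤ X.gammaC α.card :=
    le_csSup ⟨1, by rintro _ ⟨β, hβ, hc, rfl⟩; exact X.linkLam2_le_one hβ (hc ▸ hd)⟩
      ⟨α, hα, rfl, rfl⟩
  rcases (X.linkInner_self_nonneg α h).eq_or_lt' with h0 | hpos
  · rw [h0, mul_zero, ← h0]
    exact X.linkB_self_le hα hd h
  · rw [← X.linkInner_linkWalk hα]
    refine (le_sSup_quotientSet_mul (X.linkInner_self_nonneg α) ?_ hh hpos).trans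
      (mul_le_mul_of_nonneg_right hγ hpos.le)
    exact bddAbove_quotientSet (c := 1) (X.linkInner_self_nonneg α) fun f _ _ => by
      rw [one_mul, X.linkInner_linkWalk hα]
      exact X.linkB_self_le hα hd f

lemma linkInner_add_const {α : Finset V} (hα : α ∈ X.faces) (hd : α.card ≤ d) {h : V → ℝ}
    (hh : X.linkInner α h (fun _ => 1) = 0) (μ : ℝ) :
    X.linkInner α (fun x => h x + μ) (fun x => h x + μ) = X.linkInner α h h + μ ^ 2 := by
  simp only [linkInner, mul_one] at hh ⊢
  have hsum := X.sum_linkPi_single hα hd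
  rw [sum_congr rfl fun x _ => show X.linkPi α {x} * (h x + μ) * (h x + μ)
      = X.linkPi α {x} * h x * h x + 2 * μ * (X.linkPi α {x} * h x) + μ ^ 2 * X.linkPi α {x} by
    ring, sum_add_distrib, sum_add_distrib, ← mul_sum, ← mul_sum, hh, hsum]
  ring

lemma linkB_add_const {α : Finset V} (hα : α ∈ X.faces) (hd : α.card + 1 ≤ d) {h : V → ℝ}
    (hh : X.linkInner α h (fun _ => 1) = 0) (μ : ℝ) :
    X.linkB α (fun x => h x + μ) (fun x => h x + μ) = X.linkB α h h + μ ^ 2 := by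
  have hμ : X.linkInner α (fun _ => μ) (fun _ => 1) = μ := by
    simp only [linkInner, mul_one, ← sum_mul, X.sum_linkPi_single hα (by omega), one_mul]
  rw [X.linkB_add_left, X.linkB_add_right, X.linkB_add_right, X.linkB_comm α (fun _ => μ) h,
    X.linkB_const_right hα hd, X.linkB_const_right hα hd, hh, hμ]
  ring

/-- Splitting `g` into its mean and a part orthogonal to constants. -/
lemma linkB_le {α : Finset V} (hα : α ∈ X.faces) (hd : α.card + 1 ≤ d) (g : V → ℝ) :
    X.linkB α g g ≤ X.gammaC α.card * X.linkInner α g g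
      + (1 - X.gammaC α.card) * X.linkInner α g (fun _ => 1) ^ 2 := by
  set μ := X.linkInner α g (fun _ => 1)
  have hsum := X.sum_linkPi_single hα (by omega)
  have hh : X.linkInner α (fun x => g x - μ) (fun _ => 1) = 0 := by
    simp only [μ, linkInner, mul_one, mul_sub, sum_sub_distrib, ← sum_mul, hsum, one_mul,
      sub_self]
  have hg : g = fun x => (g x - μ) + μ := funext fun x => (sub_add_cancel _ _).symm
  have hB := X.linkB_le_gammaC_mul hα hd hh
  rw [hg, X.linkB_add_const hα hd hh, X.linkInner_add_const hα (by omega) hh]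
  linarith

lemma inn_succ_eq_sum_linkInner (m : ℕ) (g : Finset V → ℝ) :
    X.inn (m + 1) g g = ∑ α ∈ X.level m,
      X.W m α * X.linkInner α (fun x => g (insert x α)) (fun x => g (insert x α)) := by
  have lhs : ∀ β ∈ X.level (m + 1),
      X.W (m + 1) β * g β * g β = ∑ x ∈ β, X.W (m + 1) β / ((m : ℝ) + 1) * g β * g β := by
    intro β hβ
    rw [sum_const, (mem_filter.1 hβ).2, nsmul_eq_mul]
    push_cast
    field_simp
  have rhs : ∀ α ∈ X.level m,
      X.W m α * X.linkInner α (fun x => g (insert x α)) (fun x => g (insert x α))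
        = ∑ x ∈ X.linkVerts α,
            X.W (m + 1) (insert x α) / ((m : ℝ) + 1) * g (insert x α) * g (insert x α) := by
    intro α hα
    obtain ⟨hαf, rfl⟩ := mem_filter.1 hα
    rw [linkInner, mul_sum]
    refine sum_congr rfl fun x hx => ?_
    rw [← X.W_mul_linkPi_single hαf ((X.mem_linkVerts).1 hx).1]
    ring
  rw [inn, sum_congr rfl lhs, sum_congr rfl rhs,
    X.sum_level_succ_sum_mem m fun _ β _ => X.W (m + 1) β / ((m : ℝ) + 1) * g β * g β]

lemma sum_W_linkB_le (m : ℕ) (hm : m + 1 ≤ d) (f : Finset V → ℝ) :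
    ∑ α ∈ X.level m, X.W m α * X.linkB α (fun x => f (insert x α)) (fun x => f (insert x α))
      ≤ X.gammaC m * X.inn (m + 1) f f
        + (1 - X.gammaC m) * X.inn m (X.downOp f) (X.downOp f) := by
  rw [inn_succ_eq_sum_linkInner, inn, mul_sum, mul_sum, ← sum_add_distrib]
  refine sum_le_sum fun α hα => ?_
  obtain ⟨hαf, rfl⟩ := mem_filter.1 hα
  have hmean : X.linkInner α (fun x => f (insert x α)) (fun _ => 1) = X.downOp f α := by
    simp only [linkInner, mul_one, downOp_eq_sum_linkPi]
  have hlink := mul_le_mul_of_nonneg_left (X.linkB_le hαf hm fun x => f (insert x α))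
    (X.W_nonneg α.card α)
  rw [hmean] at hlink
  exact hlink.trans_eq (by ring)

lemma sum_W_mul_sq_erase (m : ℕ) (hm : m + 1 ≤ d) (g : Finset V → ℝ) :
    ∑ β ∈ X.level (m + 2), ∑ x ∈ β, X.W (m + 2) β * g (β.erase x) * g (β.erase x)
      = ((m : ℝ) + 2) * X.inn (m + 1) g g := by
  rw [X.sum_level_succ_sum_mem (m + 1) fun τ β _ => X.W (m + 2) β * g τ * g τ, inn, mul_sum]
  refine sum_congr rfl fun τ hτ => ?_
  obtain ⟨-, hτc⟩ := mem_filter.1 hτ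
  have := X.sum_W_insert τ (by omega)
  rw [hτc] at this
  rw [← sum_mul, ← sum_mul, this]
  push_cast
  ring

lemma sum_W_mul_sum_erase (m : ℕ) (g : Finset V → ℝ) :
    ∑ β ∈ X.level (m + 2), ∑ x ∈ β,
        X.W (m + 2) β * g (β.erase x) * ∑ y ∈ β.erase x, g (β.erase y)
      = ((m : ℝ) + 2) * ((m : ℝ) + 1) * ∑ α ∈ X.level m,
          X.W m α * X.linkB α (fun x => g (insert x α)) (fun x => g (insert x α)) := by
  have swap : ∀ τ ∈ X.level (m + 1),
      ∑ x ∈ X.linkVerts τ, X.W (m + 2) (insert x τ) * g τ * ∑ y ∈ τ, g ((insert x τ).erase y)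
        = ∑ y ∈ τ, ∑ x ∈ X.linkVerts τ,
            X.W (m + 2) (insert x τ) * g τ * g (insert x (τ.erase y)) := by
    intro τ _
    rw [sum_comm]
    refine sum_congr rfl fun x hx => ?_
    rw [mul_sum]
    refine sum_congr rfl fun y hy => ?_
    rw [erase_insert_of_ne (ne_of_mem_of_not_mem hy ((X.mem_linkVerts).1 hx).1).symm]
  have pair : ∀ σ ∈ X.level m,
      ∑ y ∈ X.linkVerts σ, ∑ x ∈ X.linkVerts (insert y σ),
          X.W (m + 2) (insert x (insert y σ)) * g (insert y σ) * g (insert x σ)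
        = ((m : ℝ) + 2) * ((m : ℝ) + 1) *
          (X.W m σ * X.linkB σ (fun x => g (insert x σ)) (fun x => g (insert x σ))) := by
    intro σ hσ
    obtain ⟨hσf, rfl⟩ := mem_filter.1 hσ
    rw [linkB, mul_sum, mul_sum]
    refine sum_congr rfl fun y hy => ?_
    rw [mul_sum, mul_sum]
    refine sum_congr rfl fun x hx => ?_
    have := X.W_mul_linkPi_pair hσf ((X.mem_linkVerts).1 hy).1 ((X.mem_linkVerts).1 hx).1
    rw [show X.W σ.card σ * (X.linkPi σ {y, x} / 2 * g (insert y σ) * g (insert x σ))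
        = X.W σ.card σ * X.linkPi σ {y, x} / 2 * g (insert y σ) * g (insert x σ) by ring, this]
    field_simp
  rw [show m + 2 = m + 1 + 1 from rfl,
    X.sum_level_succ_sum_mem (m + 1)
      fun τ β _ => X.W (m + 2) β * g τ * ∑ y ∈ τ, g (β.erase y),
    sum_congr rfl swap,
    X.sum_level_succ_sum_mem m
      fun σ τ _ => ∑ x ∈ X.linkVerts τ, X.W (m + 2) (insert x τ) * g τ * g (insert x σ),
    sum_congr rfl pair, mul_sum]

lemma inn_upOp_self (m : ℕ) (hm : m + 1 ≤ d) (g : Finset V → ℝ) :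
    X.inn (m + 2) (upOp g) (upOp g)
      = 1 / ((m : ℝ) + 2) * X.inn (m + 1) g g
        + ((m : ℝ) + 1) / ((m : ℝ) + 2) * ∑ α ∈ X.level m,
            X.W m α * X.linkB α (fun x => g (insert x α)) (fun x => g (insert x α)) := by
  have expand : ∀ β ∈ X.level (m + 2), X.W (m + 2) β * upOp g β * upOp g β
      = (1 / ((m : ℝ) + 2)) ^ 2 * (∑ x ∈ β, X.W (m + 2) β * g (β.erase x) * g (β.erase x)
        + ∑ x ∈ β, X.W (m + 2) β * g (β.erase x) * ∑ y ∈ β.erase x, g (β.erase y)) := by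
    intro β hβ
    rw [upOp_apply (m := m + 1) g (mem_filter.1 hβ).2, ← sum_add_distrib]
    have hsq : (∑ x ∈ β, g (β.erase x)) * ∑ y ∈ β, g (β.erase y)
        = ∑ x ∈ β, g (β.erase x) * (g (β.erase x) + ∑ y ∈ β.erase x, g (β.erase y)) :=
      sum_mul _ _ _ |>.trans <| sum_congr rfl fun x hx => by rw [← add_sum_erase _ _ hx]
    rw [show X.W (m + 2) β * (1 / ((↑(m + 1) : ℝ) + 1) * ∑ x ∈ β, g (β.erase x))
          * (1 / ((↑(m + 1) : ℝ) + 1) * ∑ x ∈ β, g (β.erase x))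
        = (1 / ((m : ℝ) + 2)) ^ 2 * X.W (m + 2) β
          * ((∑ x ∈ β, g (β.erase x)) * ∑ y ∈ β, g (β.erase y)) by push_cast; ring,
      hsq, mul_sum, mul_sum]
    exact sum_congr rfl fun _ _ => by ring
  rw [inn, sum_congr rfl expand, ← mul_sum, sum_add_distrib, X.sum_W_mul_sq_erase m hm,
    X.sum_W_mul_sum_erase]
  field_simp

lemma level_zero : X.level 0 = {∅} := by
  ext α
  simp only [mem_filter, card_eq_zero, mem_singleton, and_iff_right_iff_imp]
  rintro rfl
  exact X.empty_mem

lemma inn_zero (f g : Finset V → ℝ) : X.inn 0 f g = X.W 0 ∅ * f ∅ * g ∅ := by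
  show ∑ α ∈ X.level 0, _ = _
  rw [level_zero, sum_singleton]

lemma exists_ne_mem_level {m : ℕ} (h1 : 1 ≤ m) (hm : m ≤ d) :
    ∃ s ∈ X.level m, ∃ s' ∈ X.level m, s ≠ s' := by
  obtain ⟨B, hB, -, hBc⟩ := X.pure ∅ X.empty_mem
  obtain ⟨s, hsB, hsc⟩ := exists_subset_card_eq (show m ≤ B.card by omega)
  obtain ⟨x, hx⟩ : s.Nonempty := by rw [← card_pos]; omega
  obtain ⟨y, hy⟩ : (B \ s).Nonempty := by rw [← card_pos, card_sdiff_of_subset hsB]; omega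
  obtain ⟨hyB, hys⟩ := mem_sdiff.1 hy
  have hs'B : insert y (s.erase x) ⊆ B := insert_subset hyB ((erase_subset x s).trans hsB)
  have hs'c : (insert y (s.erase x)).card = m := by
    rw [card_insert_of_notMem fun h => hys (mem_of_mem_erase h), card_erase_of_mem hx]
    omega
  exact ⟨s, mem_filter.2 ⟨X.down_closed B hB s hsB, hsc⟩, _,
    mem_filter.2 ⟨X.down_closed B hB _ hs'B, hs'c⟩, fun h => hys (h ▸ mem_insert_self _ _)⟩

lemma exists_inn_one_eq_zero_ne_zero {m : ℕ} (h1 : 1 ≤ m) (hm : m ≤ d) :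
    ∃ f : Finset V → ℝ, X.inn m f (fun _ => 1) = 0 ∧ X.inn m f f ≠ 0 := by
  obtain ⟨s, hs, s', hs', hne⟩ := X.exists_ne_mem_level h1 hm
  let f : Finset V → ℝ := fun β => if β = s then X.W m s' else if β = s' then -X.W m s else 0
  have hf : ∀ g : Finset V → ℝ,
      X.inn m f g = X.W m s * X.W m s' * g s - X.W m s' * X.W m s * g s' := by
    intro g
    rw [inn, sum_eq_add_of_mem s s' hs hs' hne fun β _ hβ => by simp [f, hβ.1, hβ.2]]
    simp [f, hne.symm]
    ring
  have hWs : 0 < X.W m s := (mem_filter.1 hs).2 ▸ X.W_pos (mem_filter.1 hs).1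
  have hWs' : 0 < X.W m s' := (mem_filter.1 hs').2 ▸ X.W_pos (mem_filter.1 hs').1
  refine ⟨f, by rw [hf]; ring, ?_⟩
  rw [hf]
  simp only [f, if_pos, if_neg hne.symm]
  nlinarith [mul_pos (mul_pos hWs hWs') (add_pos hWs hWs')]

noncomputable def upBound (m : ℕ) : ℝ :=
  1 - 1 / ((m : ℝ) + 1) * ∏ j ∈ Finset.range m, (1 - X.gammaC j)

lemma upBound_succ (m : ℕ) :
    X.upBound (m + 1) = 1 / ((m : ℝ) + 2)
      + ((m : ℝ) + 1) / ((m : ℝ) + 2) * (X.gammaC m + (1 - X.gammaC m) * X.upBound m) := by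
  simp only [upBound, prod_range_succ]
  push_cast
  field_simp
  ring

/-- For `m ≥ 1` some nonzero `f` is orthogonal to the constants, so the bound `h` forces
`0 ≤ X.upBound m`. -/
lemma upBound_nonneg {m : ℕ} (hm : m ≤ d)
    (h : ∀ f, X.inn m f (fun _ => 1) = 0 →
      X.inn (m + 1) (upOp f) (upOp f) ≤ X.upBound m * X.inn m f f) :
    0 ≤ X.upBound m := by
  rcases Nat.eq_zero_or_pos m with rfl | hpos
  · simp [upBound]
  obtain ⟨f, hf, hne⟩ := X.exists_inn_one_eq_zero_ne_zero hpos hm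
  have hff := (X.inn_self_nonneg m f).lt_of_ne' hne
  nlinarith [h f hf, X.inn_self_nonneg (m + 1) (upOp f)]

lemma inn_downOp_le {m : ℕ} {c : ℝ} (hc : 0 ≤ c)
    (h : ∀ f, X.inn m f (fun _ => 1) = 0 → X.inn (m + 1) (upOp f) (upOp f) ≤ c * X.inn m f f)
    (g : Finset V → ℝ) (hg : X.inn (m + 1) g (fun _ => 1) = 0) :
    X.inn m (X.downOp g) (X.downOp g) ≤ c * X.inn (m + 1) g g :=
  le_mul_of_sq_le_mul (A := X.downOp) (B := upOp) hc (X.inn_self_nonneg (m + 1))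
    (X.inn_self_nonneg m) (fun _ => X.inn_downOp_one_eq_zero) (X.sq_inn_downOp_le m)
    (fun f hf _ => h f hf) hg

lemma inn_upOp_le (m : ℕ) (hm : m ≤ d) (f : Finset V → ℝ)
    (hf : X.inn m f (fun _ => 1) = 0) :
    X.inn (m + 1) (upOp f) (upOp f) ≤ X.upBound m * X.inn m f f := by
  induction m generalizing f with
  | zero =>
    rw [inn_zero, mul_one] at hf
    rw [← inn_upDown, inn_zero, hf]
    simp [upBound]
  | succ m ih =>
    have ih := ih (by omega)
    have hc := X.upBound_nonneg (by omega) ih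
    have hγ : 0 ≤ 1 - X.gammaC m := sub_nonneg.2 (X.gammaC_le_one hm)
    calc X.inn (m + 1 + 1) (upOp f) (upOp f)
        = 1 / ((m : ℝ) + 2) * X.inn (m + 1) f f
          + ((m : ℝ) + 1) / ((m : ℝ) + 2) * ∑ α ∈ X.level m,
            X.W m α * X.linkB α (fun x => f (insert x α)) (fun x => f (insert x α)) :=
          X.inn_upOp_self m hm f
      _ ≤ 1 / ((m : ℝ) + 2) * X.inn (m + 1) f f
          + ((m : ℝ) + 1) / ((m : ℝ) + 2) * (X.gammaC m * X.inn (m + 1) f f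
            + (1 - X.gammaC m) * X.inn m (X.downOp f) (X.downOp f)) := by
          gcongr
          exact X.sum_W_linkB_le m hm f
      _ ≤ 1 / ((m : ℝ) + 2) * X.inn (m + 1) f f
          + ((m : ℝ) + 1) / ((m : ℝ) + 2) * (X.gammaC m * X.inn (m + 1) f f
            + (1 - X.gammaC m) * (X.upBound m * X.inn (m + 1) f f)) := by
          gcongr
          exact X.inn_downOp_le hc ih f hf
      _ = X.upBound (m + 1) * X.inn (m + 1) f f := by
          rw [upBound_succ]
          ring

lemma lam2_upDown (m : ℕ) :
    X.lam2 m X.upDown = sSup (quotientSet (fun f => X.inn m f (fun _ => 1) = 0)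
      (fun f => X.inn (m + 1) (upOp f) (upOp f)) (fun f => X.inn m f f)) := by
  simp only [lam2, quotientSet, inn_upDown]

lemma lam2_downUp (m : ℕ) :
    X.lam2 (m + 1) X.downUp = sSup (quotientSet (fun g => X.inn (m + 1) g (fun _ => 1) = 0)
      (fun g => X.inn m (X.downOp g) (X.downOp g)) (fun g => X.inn (m + 1) g g)) := by
  simp only [lam2, quotientSet, inn_downUp]

end WSC

theorem lam2_downUp_le_general {V : Type*} [DecidableEq V] [Fintype V] {d : ℕ}
    (X : WSC V d) (k : ℕ) (hkd : k ≤ d) :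
    X.lam2 (k + 1) X.downUp = X.lam2 k X.upDown ∧
    X.lam2 (k + 1) X.downUp ≤
      1 - (1 / ((k : ℝ) + 1)) * ∏ m ∈ Finset.range k, (1 - X.gammaC m) := by
  have hU := X.inn_upOp_le k hkd
  have hc := X.upBound_nonneg hkd hU
  have hD := X.inn_downOp_le hc hU
  rw [X.lam2_downUp, X.lam2_upDown]
  refine ⟨le_antisymm ?_ ?_,
    sSup_quotientSet_le (X.inn_self_nonneg (k + 1)) hc fun g hg _ => hD g hg⟩
  · exact sSup_quotientSet_le_sSup (X.inn_self_nonneg (k + 1)) (X.inn_self_nonneg k)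
      (fun _ => X.inn_downOp_one_eq_zero) (X.sq_inn_downOp_le k)
      (bddAbove_quotientSet (X.inn_self_nonneg k) fun f hf _ => hU f hf)
  · exact sSup_quotientSet_le_sSup (X.inn_self_nonneg k) (X.inn_self_nonneg (k + 1))
      (fun _ => X.inn_upOp_one_eq_zero hkd) (X.sq_inn_upOp_le k)
      (bddAbove_quotientSet (X.inn_self_nonneg (k + 1)) fun g hg _ => hD g hg)

/-- **Theorem (main).** Let `(X, Π)` be a weighted pure `d`-dimensional simplicial
complex.  For every `1 ≤ k ≤ d`, the second eigenvalues of the `k`-th down-up walk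
and the `(k-1)`-th up-down walk coincide and satisfy
`λ₂(P∨_k) = λ₂(P∧_{k-1}) ≤ 1 - (1/(k+1)) ∏_{j=-1}^{k-2} (1 - γ_j)`.
(Here `X.gammaC m = γ_{m-1}`, so the product over `j = -1, …, k-2` is the product
over `m ∈ range k`; `P∨_k` acts on faces of cardinality `k+1` and `P∧_{k-1}` on
faces of cardinality `k`.) -/
theorem lam2_downUp_le {V : Type*} [DecidableEq V] [Fintype V] {d : ℕ}
    (X : WSC V d) (k : ℕ) (hk1 : 1 ≤ k) (hkd : k ≤ d) :
    X.lam2 (k + 1) X.downUp = X.lam2 k X.upDown ∧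
    X.lam2 (k + 1) X.downUp ≤
      1 - (1 / ((k : ℝ) + 1)) * ∏ m ∈ Finset.range k, (1 - X.gammaC m) :=
  lam2_downUp_le_general X k hkd
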